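/- arXiv:2512.06470 — 3 statements merged into one kernel-verified Lean document; each statement's English description precedes it below -/
import Mathlib

section
/- If s ≥ 0 is real, i, p are nonnegative integers, j is a positive integer, and j·s ≥ i − p, then for every positive integer k and nonnegative integer l with k − j − l ≥ 0, one has (k−j−l)^i · ((k−j−l)!)^s · (l!)^s ≤ k^p · (k!)^s. -/
set_option autoImplicit false

/-!
With `m = k - j - l`, bound `m ^ i ≤ (m + 1) ^ i ≤ k ^ p * (m + 1) ^ (j * s)`, using `m + 1 ≤ k` and
`i - p ≤ j * s`. The remaining factor `((m + 1) ^ j * m! * l!) ^ s` is at most `(k!) ^ s`, since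
`m! * (m + 1) ^ j ≤ (m + j)!` and `(m + j)! * l!` divides `(m + j + l)! = k!`.
-/

open Nat

theorem Nat.factorial_mul_succ_pow_mul_factorial_le (m j l : ℕ) :
    m ! * (m + 1) ^ j * l ! ≤ (m + j + l)! :=
  calc m ! * (m + 1) ^ j * l ! ≤ (m + j)! * l ! :=
        Nat.mul_le_mul_right _ factorial_mul_pow_le_factorial
    _ ≤ (m + j + l)! :=
        Nat.le_of_dvd (factorial_pos _) (factorial_mul_factorial_dvd_factorial_add _ _)

theorem Real.pow_le_pow_mul_rpow {x y t : ℝ} (hx : 1 ≤ x) (hxy : x ≤ y) {i p : ℕ}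
    (h : (i : ℝ) - p ≤ t) : x ^ i ≤ y ^ p * x ^ t :=
  calc x ^ i = x ^ (p : ℝ) * x ^ ((i : ℝ) - p) := by
        rw [← Real.rpow_add (by linarith), add_sub_cancel, Real.rpow_natCast]
    _ ≤ y ^ p * x ^ t := by
        rw [Real.rpow_natCast]
        have hy : 0 ≤ y := by linarith
        gcongr

theorem stmt_0 (s : ℝ) (hs : 0 ≤ s) (i p j : ℕ) (hj : 1 ≤ j)
    (hjs : (i : ℝ) - p ≤ (j : ℝ) * s) :
    ∀ k l : ℕ, 1 ≤ k → j + l ≤ k →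
      ((k - j - l : ℕ) : ℝ) ^ i * ((k - j - l : ℕ).factorial : ℝ) ^ s *
          ((l.factorial : ℝ)) ^ s ≤
        (k : ℝ) ^ p * ((k.factorial : ℝ)) ^ s := by
  intro k l _ hjl
  set m := k - j - l
  have hk : m + j + l = k := by omega
  have hm : ((m + 1 : ℕ) : ℝ) ≤ k := by exact_mod_cast (by omega : m + 1 ≤ k)
  have hfac : ((m ! * (m + 1) ^ j * l ! : ℕ) : ℝ) ≤ k ! := by
    rw [← hk]; exact_mod_cast factorial_mul_succ_pow_mul_factorial_le m j l
  calc (m : ℝ) ^ i * (m ! : ℝ) ^ s * (l ! : ℝ) ^ s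
      ≤ ((m + 1 : ℕ) : ℝ) ^ i * (m ! : ℝ) ^ s * (l ! : ℝ) ^ s := by gcongr; linarith
    _ ≤ (k : ℝ) ^ p * ((m + 1 : ℕ) : ℝ) ^ ((j : ℝ) * s) * (m ! : ℝ) ^ s * (l ! : ℝ) ^ s := by
        gcongr
        exact Real.pow_le_pow_mul_rpow (by simp) hm hjs
    _ = (k : ℝ) ^ p * ((m ! * (m + 1) ^ j * l ! : ℕ) : ℝ) ^ s := by
        push_cast
        rw [Real.mul_rpow (by positivity) (by positivity),
          Real.mul_rpow (by positivity) (by positivity), Real.rpow_mul (by positivity),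
          Real.rpow_natCast]
        ring
    _ ≤ (k : ℝ) ^ p * (k ! : ℝ) ^ s := by gcongr
end

section
/- If s ≥ 0 is real, i, p are nonnegative integers, j is a positive integer, and there exists a real s' < s with j·s' ≥ i − p, then for every positive integer k and nonnegative integer l with k − j − l ≥ 0, one has (k−j−l)^i · ((k−j−l)!)^s · (l!)^s / (k^p · (k!)^s) ≤ k^{s'−s}. -/
/-! With `m = k - j - l` and `M = max m 1`, use `m! l! ≤ (k - j)!` and
`k! ≥ k · M^(j-1) · (k - j)!` (the `j - 1` factors `k - 1, …, k - j + 1` of `k! / (k (k - j)!)` are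
all at least `M`). This reduces the claim to `M^i ≤ k^(p + s') · M^((j - 1) s)` for
`1 ≤ M ≤ k`, which follows from `i ≤ p + j s'`: for `s' ≤ 0` already `i ≤ p + s'`, and for
`s' ≥ 0` split `M^(p + j s') = M^(p + s') · M^((j - 1) s')`. Passing to `M` instead of `m` keeps
the base at least `1` when `m = 0`. -/

open Real
open scoped Nat

theorem Nat.mul_pow_mul_factorial_sub_le_factorial {j k M : ℕ} (hj : 1 ≤ j) (hjk : j ≤ k)
    (hM : M ≤ k - j + 1) : k * M ^ (j - 1) * (k - j)! ≤ k ! := by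
  have hk : k = (k - j + (j - 1)) + 1 := by omega
  calc k * M ^ (j - 1) * (k - j)!
      ≤ k * (k - j + 1).ascFactorial (j - 1) * (k - j)! := by
        gcongr; exact (Nat.pow_le_pow_left hM _).trans (Nat.pow_succ_le_ascFactorial _ _)
    _ = k ! := by
        rw [hk, Nat.factorial_succ, ← Nat.factorial_mul_ascFactorial, ← hk]; ring

theorem Real.rpow_le_rpow_add_mul_rpow {M K a b j s s' : ℝ} (hM : 1 ≤ M) (hMK : M ≤ K)
    (ha : 0 ≤ a) (hb : 0 ≤ b) (hj : 1 ≤ j) (hs : 0 ≤ s) (hs' : s' ≤ s)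
    (hab : a - b ≤ j * s') :
    M ^ a ≤ K ^ (b + s') * M ^ ((j - 1) * s) := by
  have hK : 1 ≤ K := hM.trans hMK
  rcases le_total s' 0 with hneg | hpos
  · calc M ^ a ≤ K ^ a := rpow_le_rpow (by linarith) hMK ha
      _ ≤ K ^ (b + s') := rpow_le_rpow_of_exponent_le hK (by nlinarith)
      _ ≤ K ^ (b + s') * M ^ ((j - 1) * s) :=
        le_mul_of_one_le_right (by positivity) (one_le_rpow hM (by nlinarith))
  · calc M ^ a ≤ M ^ ((b + s') + (j - 1) * s') := rpow_le_rpow_of_exponent_le hM (by linarith)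
      _ = M ^ (b + s') * M ^ ((j - 1) * s') := rpow_add (by linarith) _ _
      _ ≤ K ^ (b + s') * M ^ ((j - 1) * s) := by gcongr

theorem stmt_1 (s s' : ℝ) (hs : 0 ≤ s) (hs' : s' < s) (i p j : ℕ) (hj : 1 ≤ j)
    (hjs : (i : ℝ) - p ≤ (j : ℝ) * s') :
    ∀ k l : ℕ, 1 ≤ k → j + l ≤ k →
      ((k - j - l : ℕ) : ℝ) ^ i * ((k - j - l : ℕ).factorial : ℝ) ^ s *
          ((l.factorial : ℝ)) ^ s / ((k : ℝ) ^ p * ((k.factorial : ℝ)) ^ s) ≤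
        (k : ℝ) ^ (s' - s) := by
  intro k l hk hjl
  set m := k - j - l
  set n := k - j
  set M := max m 1
  have hk0 : (0 : ℝ) < k := by exact_mod_cast hk
  have hmM : (m : ℝ) ≤ M := by exact_mod_cast le_max_left m 1
  have hM1 : (1 : ℝ) ≤ M := by exact_mod_cast le_max_right m 1
  have hMk : (M : ℝ) ≤ k := by exact_mod_cast (show M ≤ k by omega)
  have hmln : ((m ! * l ! : ℕ) : ℝ) ≤ n ! := by
    have h : m ! * l ! ∣ n ! :=
      (show m + l = n by omega) ▸ m.factorial_mul_factorial_dvd_factorial_add l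
    exact_mod_cast Nat.le_of_dvd n.factorial_pos h
  have hkMn : ((k * M ^ (j - 1) * n ! : ℕ) : ℝ) ≤ k ! := by
    exact_mod_cast Nat.mul_pow_mul_factorial_sub_le_factorial hj (by omega) (by omega)
  push_cast at hmln hkMn
  have hjM : ((M : ℝ) ^ (j - 1)) ^ s = (M : ℝ) ^ (((j : ℝ) - 1) * s) := by
    rw [← rpow_natCast, ← rpow_mul (by positivity), Nat.cast_sub hj, Nat.cast_one]
  have hkp : (k : ℝ) ^ ((p : ℝ) + s') = k ^ (s' - s) * k ^ p * k ^ s := by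
    rw [← rpow_natCast, ← rpow_add hk0, ← rpow_add hk0]; ring_nf
  rw [div_le_iff₀ (by positivity)]
  calc (m : ℝ) ^ i * (m ! : ℝ) ^ s * (l ! : ℝ) ^ s
      = (m : ℝ) ^ i * ((m ! : ℝ) * l !) ^ s := by
        rw [mul_rpow (by positivity) (by positivity)]; ring
    _ ≤ (M : ℝ) ^ (i : ℝ) * (n ! : ℝ) ^ s := by
        rw [rpow_natCast]; gcongr
    _ ≤ (k : ℝ) ^ ((p : ℝ) + s') * (M : ℝ) ^ (((j : ℝ) - 1) * s) * (n ! : ℝ) ^ s := by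
        gcongr
        exact rpow_le_rpow_add_mul_rpow hM1 hMk (by positivity) (by positivity)
          (by exact_mod_cast hj) hs hs'.le hjs
    _ = (k : ℝ) ^ (s' - s) * ((k : ℝ) ^ p * ((k : ℝ) * (M : ℝ) ^ (j - 1) * n !) ^ s) := by
        rw [mul_rpow (by positivity) (by positivity), mul_rpow (by positivity) (by positivity),
          hjM, hkp]
        ring
    _ ≤ (k : ℝ) ^ (s' - s) * ((k : ℝ) ^ p * (k ! : ℝ) ^ s) := by gcongr
end

section
/- If s ≥ 0 is real, i, p are nonnegative integers, j is a positive integer, and j·s = i − p, then for every positive integer k with k ≥ 2j, one has (k−j)^i · ((k−j)!)^s / (k^p · (k!)^s) ≥ 1/2^i. -/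
set_option autoImplicit false

/-!
Since `k! = (k - j)! · k(k-1)⋯(k-j+1) ≤ (k - j)! · k^j`, raising to the power `s ≥ 0` and using
`j s = i - p` gives `k^p (k!)^s ≤ ((k - j)!)^s k^i`. The quotient is therefore at least
`((k - j) / k)^i`, and `k ≥ 2j` makes `(k - j) / k ≥ 1/2`.
-/

open Nat

theorem Nat.factorial_le_factorial_sub_mul_pow {j k : ℕ} (h : j ≤ k) : k ! ≤ (k - j)! * k ^ j := by
  rw [← Nat.factorial_mul_descFactorial h]
  exact Nat.mul_le_mul_left _ (Nat.descFactorial_le_pow k j)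

theorem Real.pow_mul_rpow_le_of_le_mul_pow {a b x s : ℝ} {i p j : ℕ} (ha : 0 ≤ a) (hb : 0 ≤ b)
    (hx : 0 < x) (hs : 0 ≤ s) (hjs : (j : ℝ) * s = (i : ℝ) - p) (hab : a ≤ b * x ^ j) :
    x ^ p * a ^ s ≤ b ^ s * x ^ i := by
  have hxj : (x ^ j) ^ s = x ^ i / x ^ p := by
    rw [← Real.rpow_natCast x j, ← Real.rpow_mul hx.le, hjs, Real.rpow_sub hx,
      Real.rpow_natCast, Real.rpow_natCast]
  calc x ^ p * a ^ s ≤ x ^ p * (b * x ^ j) ^ s := by gcongr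
    _ = b ^ s * x ^ i := by
      rw [Real.mul_rpow hb (by positivity), hxj]
      field_simp

theorem half_le_cast_sub_div {j k : ℕ} (hk : 2 * j ≤ k) (hk0 : 0 < k) :
    (1 / 2 : ℝ) ≤ ((k - j : ℕ) : ℝ) / k := by
  rw [div_le_div_iff₀ two_pos (by exact_mod_cast hk0)]
  exact_mod_cast (by omega : 1 * k ≤ (k - j) * 2)

theorem stmt_2 (s : ℝ) (hs : 0 ≤ s) (i p j : ℕ) (hj : 1 ≤ j)
    (hjs : (j : ℝ) * s = (i : ℝ) - p) :
    ∀ k : ℕ, 2 * j ≤ k →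
      ((k - j : ℕ) : ℝ) ^ i * ((k - j : ℕ).factorial : ℝ) ^ s /
          ((k : ℝ) ^ p * ((k.factorial : ℝ)) ^ s) ≥ 1 / 2 ^ i := by
  intro k hk
  have hk0 : 0 < k := by omega
  have hkpos : (0 : ℝ) < k := by exact_mod_cast hk0
  have hfac : (k ! : ℝ) ≤ ((k - j)! : ℝ) * (k : ℝ) ^ j := by
    exact_mod_cast Nat.factorial_le_factorial_sub_mul_pow (by omega : j ≤ k)
  have hden : (k : ℝ) ^ p * (k ! : ℝ) ^ s ≤ ((k - j)! : ℝ) ^ s * (k : ℝ) ^ i :=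
    Real.pow_mul_rpow_le_of_le_mul_pow (by positivity) (by positivity) hkpos hs hjs hfac
  calc (1 : ℝ) / 2 ^ i = (1 / 2) ^ i := by rw [div_pow, one_pow]
    _ ≤ (((k - j : ℕ) : ℝ) / k) ^ i :=
      pow_le_pow_left₀ (by norm_num) (half_le_cast_sub_div hk hk0) i
    _ = ((k - j : ℕ) : ℝ) ^ i * ((k - j)! : ℝ) ^ s / (((k - j)! : ℝ) ^ s * (k : ℝ) ^ i) := by
      rw [div_pow]
      field_simp
    _ ≤ _ := div_le_div_of_nonneg_left (by positivity) (by positivity) hden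
end
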